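/- Let R ∈ (0, +∞], let λ, μ : [0,R) → ℝ be smooth positive functions, let H > 0 be a constant, and define c(r) = r⁻²∫₀^r s·λ(s)²·μ(s) ds, g₁(r) = 2Hr·c(r)/μ(r)² and g₂(r) = 2Hr·c(r)/(λ(r)·μ(r)) for r ∈ (0,R) (with g₁(0) = g₂(0) = 0). Suppose there is ρ_H ∈ (0,R) such that g₂(r) < 1 for all r ∈ [0, ρ_H), g₂(ρ_H) = 1 and g₂′(ρ_H) = 0. Then the improper integral ∫₀^{ρ_H} g₁(r)/√(1 − g₂(r)²) dr diverges to +∞. -/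

import Mathlib

open MeasureTheory

/-- `c(r) = r⁻² ∫₀^r s·λ(s)²·μ(s) ds`. -/
noncomputable def cProfile (lam mu : ℝ → ℝ) (r : ℝ) : ℝ :=
  (r ^ 2)⁻¹ * ∫ s in (0:ℝ)..r, s * lam s ^ 2 * mu s

/-- `g₁(r) = 2Hr·c(r)/μ(r)²`. -/
noncomputable def g1 (lam mu : ℝ → ℝ) (H r : ℝ) : ℝ :=
  2 * H * r * cProfile lam mu r / (mu r) ^ 2

/-- `g₂(r) = 2Hr·c(r)/(λ(r)·μ(r))`. -/
noncomputable def g2 (lam mu : ℝ → ℝ) (H r : ℝ) : ℝ :=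
  2 * H * r * cProfile lam mu r / (lam r * mu r)

/-! Near `ρ_H` the function `g₂` is `C²` with `g₂(ρ_H) = 1` and `g₂'(ρ_H) = 0`, so
`1 - g₂(r) = O((ρ_H - r)²)` and hence `√(1 - g₂(r)²) ≤ √(2 (1 - g₂(r))) = O(ρ_H - r)`. On the other
hand `g₁(ρ_H) = g₂(ρ_H) λ(ρ_H)/μ(ρ_H) > 0`, so near `ρ_H` the integrand dominates `c/(ρ_H - r)` for
some `c > 0`, and the integral diverges logarithmically. -/

open Filter Topology Asymptotics Set

theorem isBigO_sub_sq_of_deriv_eq_zero {g : ℝ → ℝ} {x₀ : ℝ}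
    (hg : ∀ᶠ y in 𝓝 x₀, DifferentiableAt ℝ g y) (hg' : DifferentiableAt ℝ (deriv g) x₀)
    (h₀ : deriv g x₀ = 0) :
    (fun y => g y - g x₀) =O[𝓝 x₀] fun y => (y - x₀) ^ 2 := by
  obtain ⟨K, hK, hKg⟩ := hg'.hasDerivAt.isBigO_sub.exists_pos
  obtain ⟨ε, hε, hball⟩ := Metric.eventually_nhds_iff_ball.1 (hg.and hKg.bound)
  refine IsBigO.of_bound K ?_
  filter_upwards [Metric.ball_mem_nhds x₀ hε] with y hy
  have hsub : Metric.closedBall x₀ (dist y x₀) ⊆ Metric.ball x₀ ε :=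
    Metric.closedBall_subset_ball hy
  have hbound : ∀ z ∈ Metric.closedBall x₀ (dist y x₀), ‖deriv g z‖ ≤ K * dist y x₀ := by
    intro z hz
    have hz' := (hball z (hsub hz)).2
    rw [h₀, sub_zero, ← dist_eq_norm] at hz'
    exact hz'.trans (mul_le_mul_of_nonneg_left (Metric.mem_closedBall.1 hz) hK.le)
  have hmvt := (convex_closedBall x₀ (dist y x₀)).norm_image_sub_le_of_norm_deriv_le
    (fun z hz => (hball z (hsub hz)).1) hbound (Metric.mem_closedBall_self dist_nonneg)
    (Metric.mem_closedBall.2 le_rfl)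
  rw [← dist_eq_norm y x₀, mul_assoc, ← sq] at hmvt
  simpa [Real.dist_eq] using hmvt

theorem ContDiffOn.isBigO_sub_sq_of_deriv_eq_zero {g : ℝ → ℝ} {s : Set ℝ} {x₀ : ℝ}
    (hg : ContDiffOn ℝ 2 g s) (hs : IsOpen s) (hx₀ : x₀ ∈ s) (h₀ : deriv g x₀ = 0) :
    (fun y => g y - g x₀) =O[𝓝 x₀] fun y => (y - x₀) ^ 2 :=
  _root_.isBigO_sub_sq_of_deriv_eq_zero
    (eventually_of_mem (hs.mem_nhds hx₀) fun y hy =>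
      (hg.differentiableOn two_ne_zero y hy).differentiableAt (hs.mem_nhds hy))
    (((hg.deriv_of_isOpen hs (m := 1) (by norm_num)).differentiableOn one_ne_zero x₀
      hx₀).differentiableAt (hs.mem_nhds hx₀)) h₀

theorem lintegral_Ioo_ofReal_div_sub_eq_top {a b c : ℝ} (hab : a < b) (hc : 0 < c) :
    ∫⁻ r in Ioo a b, ENNReal.ofReal (c / (b - r)) = ⊤ := by
  by_contra hfin
  have hint : IntegrableOn (fun r => c / (b - r)) (Ioo a b) := by
    refine (lintegral_ofReal_ne_top_iff_integrable ?_ ?_).1 hfin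
    · exact (continuousOn_const.div (continuousOn_const.sub continuousOn_id)
        fun r hr => (sub_pos.2 hr.2).ne').aestronglyMeasurable measurableSet_Ioo
    · filter_upwards [ae_restrict_mem measurableSet_Ioo] with r hr
      exact div_nonneg hc.le (sub_pos.2 hr.2).le
  have hinv : IntervalIntegrable (fun r => (r - b)⁻¹) volume a b := by
    refine (intervalIntegrable_iff_integrableOn_Ioo_of_le hab.le).2 ?_
    refine IntegrableOn.congr_fun (hint.const_mul (-c⁻¹)) (fun r _ => ?_) measurableSet_Ioo
    rw [← neg_sub b r, inv_neg]
    field_simp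
  rcases intervalIntegrable_sub_inv_iff.1 hinv with h | h
  · exact hab.ne h
  · exact h right_mem_uIcc

theorem lintegral_Ioo_ofReal_eq_top_of_div_sub_le {f : ℝ → ℝ} {a b c : ℝ} (hab : a < b)
    (hc : 0 < c) (hf : ∀ᶠ r in 𝓝[<] b, c / (b - r) ≤ f r) :
    ∫⁻ r in Ioo a b, ENNReal.ofReal (f r) = ⊤ := by
  obtain ⟨a', ha', hsub⟩ := (mem_nhdsLT_iff_exists_mem_Ico_Ioo_subset hab).1 hf
  refine eq_top_iff.2 ?_
  calc ⊤ = ∫⁻ r in Ioo a' b, ENNReal.ofReal (c / (b - r)) :=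
        (lintegral_Ioo_ofReal_div_sub_eq_top ha'.2 hc).symm
    _ ≤ ∫⁻ r in Ioo a' b, ENNReal.ofReal (f r) :=
        setLIntegral_mono' measurableSet_Ioo fun r hr => ENNReal.ofReal_le_ofReal (hsub hr)
    _ ≤ ∫⁻ r in Ioo a b, ENNReal.ofReal (f r) :=
        lintegral_mono_set (Ioo_subset_Ioo_left ha'.1)

theorem div_div_le_div_sqrt_one_sub_sq {m x g C d : ℝ} (hm : 0 ≤ m) (hx : m ≤ x) (hg : |g| < 1)
    (hC : 0 ≤ C) (hd : 0 ≤ d) (h : 1 - g ≤ C * d ^ 2) :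
    m / √(2 * C) / d ≤ x / √(1 - g ^ 2) := by
  have hsqrt : √(1 - g ^ 2) ≤ √(2 * C) * d := by
    rw [← Real.sqrt_sq hd, ← Real.sqrt_mul (by positivity)]
    -- `1 - g² = 2 (1 - g) - (1 - g)²`
    exact Real.sqrt_le_sqrt (by nlinarith [sq_nonneg (1 - g)])
  rw [div_div]
  exact div_le_div₀ (hm.trans hx) hx
    (Real.sqrt_pos.2 (sub_pos.2 ((sq_lt_one_iff_abs_lt_one g).2 hg))) hsqrt

theorem contDiffOn_primitive {f : ℝ → ℝ} {a b : ℝ} {n : ℕ∞}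
    (hc : ContinuousOn f (Ico a b)) (hf : ContDiffOn ℝ n f (Ioo a b)) :
    ContDiffOn ℝ (n + 1) (fun r => ∫ s in a..r, f s) (Ioo a b) := by
  have hderiv : ∀ r ∈ Ioo a b, HasDerivAt (fun r => ∫ s in a..r, f s) (f r) r := by
    intro r hr
    refine intervalIntegral.integral_hasDerivAt_right ?_ ?_ ?_
    · exact (hc.mono (Icc_subset_Ico_right hr.2)).intervalIntegrable_of_Icc hr.1.le
    · exact (hc.mono Ioo_subset_Ico_self).stronglyMeasurableAtFilter isOpen_Ioo r hr
    · exact hc.continuousAt (Ico_mem_nhds hr.1 hr.2)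
  rw [contDiffOn_succ_iff_deriv_of_isOpen isOpen_Ioo]
  refine ⟨fun r hr => (hderiv r hr).differentiableAt.differentiableWithinAt, by simp, ?_⟩
  exact hf.congr fun r hr => (hderiv r hr).deriv

theorem exists_lt_Ico_subset {S : Set ℝ} {ρ : ℝ}
    (hS : S = Ici 0 ∨ ∃ R : ℝ, 0 < R ∧ S = Ico 0 R) (hρ : ρ ∈ S) :
    ∃ R, ρ < R ∧ Ico 0 R ⊆ S := by
  rcases hS with rfl | ⟨R, -, rfl⟩
  · exact ⟨ρ + 1, lt_add_one ρ, Ico_subset_Ici_self⟩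
  · exact ⟨R, hρ.2, subset_rfl⟩

section Profile

variable {lam mu : ℝ → ℝ} {R : ℝ} {n : ℕ∞}

theorem contDiffOn_cProfile (hlam : ContDiffOn ℝ n lam (Ico 0 R))
    (hmu : ContDiffOn ℝ n mu (Ico 0 R)) : ContDiffOn ℝ n (cProfile lam mu) (Ioo 0 R) := by
  have hh : ContDiffOn ℝ n (fun s => s * lam s ^ 2 * mu s) (Ico 0 R) :=
    (contDiffOn_id.mul (hlam.pow 2)).mul hmu
  have hF := (contDiffOn_primitive hh.continuousOn (hh.mono Ioo_subset_Ico_self)).of_le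
    (le_self_add : (n : WithTop ℕ∞) ≤ n + 1)
  exact ((contDiffOn_id.pow 2).inv fun r hr => pow_ne_zero 2 hr.1.ne').mul hF

theorem contDiffOn_g1 (hlam : ContDiffOn ℝ n lam (Ico 0 R))
    (hmu : ContDiffOn ℝ n mu (Ico 0 R)) (hmu0 : ∀ r ∈ Ioo 0 R, mu r ≠ 0) (H : ℝ) :
    ContDiffOn ℝ n (g1 lam mu H) (Ioo 0 R) :=
  (contDiffOn_const.mul contDiffOn_id).mul (contDiffOn_cProfile hlam hmu) |>.div
    ((hmu.mono Ioo_subset_Ico_self).pow 2) fun r hr => pow_ne_zero 2 (hmu0 r hr)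

theorem contDiffOn_g2 (hlam : ContDiffOn ℝ n lam (Ico 0 R))
    (hmu : ContDiffOn ℝ n mu (Ico 0 R)) (hlam0 : ∀ r ∈ Ioo 0 R, lam r ≠ 0)
    (hmu0 : ∀ r ∈ Ioo 0 R, mu r ≠ 0) (H : ℝ) :
    ContDiffOn ℝ n (g2 lam mu H) (Ioo 0 R) :=
  (contDiffOn_const.mul contDiffOn_id).mul (contDiffOn_cProfile hlam hmu) |>.div
    ((hlam.mul hmu).mono Ioo_subset_Ico_self) fun r hr => mul_ne_zero (hlam0 r hr) (hmu0 r hr)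

theorem g1_eq_g2_mul {H r : ℝ} (hlam : lam r ≠ 0) :
    g1 lam mu H r = g2 lam mu H r * (lam r / mu r) := by
  rcases eq_or_ne (mu r) 0 with hmu | hmu
  · simp [g1, g2, hmu]
  · unfold g1 g2
    field_simp

end Profile

theorem H_cigar_profile_integral_diverges_general
    (S : Set ℝ) (hS : S = Set.Ici 0 ∨ ∃ R : ℝ, 0 < R ∧ S = Set.Ico 0 R)
    (lam mu : ℝ → ℝ)
    (hlam : ContDiffOn ℝ (⊤ : ℕ∞) lam S) (hmu : ContDiffOn ℝ (⊤ : ℕ∞) mu S)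
    (hlampos : ∀ r ∈ S, 0 < lam r) (hmupos : ∀ r ∈ S, 0 < mu r)
    (H : ℝ)
    (ρH : ℝ) (hρH : ρH ∈ S) (hρHpos : 0 < ρH)
    (hlt : ∀ r : ℝ, 0 ≤ r → r < ρH → g2 lam mu H r < 1)
    (heq : g2 lam mu H ρH = 1)
    (hder : deriv (g2 lam mu H) ρH = 0) :
    (∫⁻ r in Set.Ioo 0 ρH,
        ENNReal.ofReal (g1 lam mu H r / Real.sqrt (1 - g2 lam mu H r ^ 2))) = ⊤ := by
  obtain ⟨R, hρR, hRS⟩ := exists_lt_Ico_subset hS hρH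
  have hρ : ρH ∈ Ioo 0 R := ⟨hρHpos, hρR⟩
  have hU : Ioo 0 R ∈ 𝓝 ρH := isOpen_Ioo.mem_nhds hρ
  have hlam0 : ∀ r ∈ Ioo 0 R, lam r ≠ 0 := fun r hr =>
    (hlampos r (hRS (Ioo_subset_Ico_self hr))).ne'
  have hmu0 : ∀ r ∈ Ioo 0 R, mu r ≠ 0 := fun r hr =>
    (hmupos r (hRS (Ioo_subset_Ico_self hr))).ne'
  have hg1 := (contDiffOn_g1 (hlam.mono hRS) (hmu.mono hRS) hmu0 H).continuousOn.continuousAt hU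
  have hg2 : ContDiffOn ℝ 2 (g2 lam mu H) (Ioo 0 R) :=
    (contDiffOn_g2 (hlam.mono hRS) (hmu.mono hRS) hlam0 hmu0 H).of_le
      (WithTop.coe_le_coe.2 (le_top : (2 : ℕ∞) ≤ ⊤))
  obtain ⟨C, hC, hquad⟩ := (hg2.isBigO_sub_sq_of_deriv_eq_zero isOpen_Ioo hρ hder).exists_pos
  have hg1ρ : 0 < g1 lam mu H ρH := by
    rw [g1_eq_g2_mul (hlampos ρH hρH).ne', heq, one_mul]
    exact div_pos (hlampos ρH hρH) (hmupos ρH hρH)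
  have hg2near : ∀ᶠ r in 𝓝 ρH, 0 < g2 lam mu H r :=
    (hg2.continuousOn.continuousAt hU).eventually (eventually_gt_nhds (heq ▸ one_pos))
  refine lintegral_Ioo_ofReal_eq_top_of_div_sub_le hρHpos
    (c := g1 lam mu H ρH / 2 / √(2 * C)) (by positivity) ?_
  filter_upwards [self_mem_nhdsWithin, nhdsWithin_le_nhds hU,
    nhdsWithin_le_nhds hquad.bound, nhdsWithin_le_nhds hg2near,
    nhdsWithin_le_nhds (hg1.eventually (eventually_ge_nhds (half_lt_self hg1ρ)))]
    with r hrρ hr hquadr hg2r hg1r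
  rw [heq, Real.norm_eq_abs, abs_sub_comm, norm_pow, Real.norm_eq_abs, sq_abs, sub_sq_comm]
    at hquadr
  exact div_div_le_div_sqrt_one_sub_sq (half_pos hg1ρ).le hg1r
    (abs_lt.2 ⟨by linarith, hlt r hr.1.le hrρ⟩) hC.le (sub_pos.2 hrρ).le
    ((le_abs_self _).trans hquadr)

/-- If the causality function `g₂` reaches the value `1` at a radius `ρ_H ∈ (0,R)` with
`g₂′(ρ_H) = 0`, then the profile height integral `∫₀^{ρ_H} g₁/√(1-g₂²)` diverges to `+∞`
(the rotational `H`-graph is a complete non-entire `H`-cigar). -/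
theorem H_cigar_profile_integral_diverges
    (S : Set ℝ) (hS : S = Set.Ici 0 ∨ ∃ R : ℝ, 0 < R ∧ S = Set.Ico 0 R)
    (lam mu : ℝ → ℝ)
    (hlam : ContDiffOn ℝ (⊤ : ℕ∞) lam S) (hmu : ContDiffOn ℝ (⊤ : ℕ∞) mu S)
    (hlampos : ∀ r ∈ S, 0 < lam r) (hmupos : ∀ r ∈ S, 0 < mu r)
    (H : ℝ) (hH : 0 < H)
    (ρH : ℝ) (hρH : ρH ∈ S) (hρHpos : 0 < ρH)
    (hlt : ∀ r : ℝ, 0 ≤ r → r < ρH → g2 lam mu H r < 1)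
    (heq : g2 lam mu H ρH = 1)
    (hder : deriv (g2 lam mu H) ρH = 0) :
    (∫⁻ r in Set.Ioo 0 ρH,
        ENNReal.ofReal (g1 lam mu H r / Real.sqrt (1 - g2 lam mu H r ^ 2))) = ⊤ :=
  H_cigar_profile_integral_diverges_general S hS lam mu hlam hmu hlampos hmupos H ρH hρH hρHpos hlt
    heq hder
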